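/- Let n be a positive integer, p a prime, and let i be the smallest index with 0 ≤ i ≤ n−2 such that p | (n−i) (assuming p | n!). Then modulo p, the polynomial f_n(x) = ∑_{k=0}^{n} (n!/k!)·x^k factors as x^{n−i} · h(x), where h(x) = ∑_{j=0}^{i} (n!/(n−j)!)·x^{i−j} mod p, and moreover h is separable modulo p with h(0) ≢ 0 mod p. -/

import Mathlib

open Polynomial NumberField

/-- The monic integer polynomial `n!` times the `n`-th Taylor polynomial of `exp`:
`f_n(x) = ∑_(k=0)^(n) (n!/k!) x^k`. -/
noncomputable def fInt (n : ℕ) : Polynomial ℤ :=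
  ∑ k ∈ Finset.range (n + 1), C ((n.factorial / k.factorial : ℕ) : ℤ) * X ^ k

/-- The index `[ℤ_K : ℤ[θ]]` of the order `ℤ[θ]` in the ring of integers of `K`. -/
noncomputable def subIdx {K : Type*} [Field K] [NumberField K] (θ : 𝓞 K) : ℕ :=
  (Subalgebra.toSubmodule (Algebra.adjoin ℤ ({θ} : Set (𝓞 K)))).toAddSubgroup.index

/-- The cofactor `h(x) = ∑_(j=0)^(i) (n!/(n-j)!) x^(i-j)`. -/
noncomputable def hPoly (n i : ℕ) : Polynomial ℤ :=
  ∑ j ∈ Finset.range (i + 1), C ((n.factorial / (n - j).factorial : ℕ) : ℤ) * X ^ (i - j)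

/-!
Mod `p` every coefficient `n!/k!` with `k < n - i` vanishes, being a multiple of `n - i`; this
gives `f = X^(n-i) h`. The constant term `n!/(n-i)! = n (n-1) ⋯ (n-i+1)` of `h` is prime to `p` by
the minimality of `i`. For separability, `f' = f - X^n`, and because `n - i ≡ 0` the derivative of
`X^(n-i) h` is `X^(n-i) h'`; cancelling `X^(n-i)` gives `h' = h - X^i`, so a common factor of `h`
and `h'` divides `X^i`, which is coprime to `h`.
-/

open Nat

theorem factorial_div_factorial_succ_mul {k n : ℕ} (hk : k < n) :
    n ! / (k + 1)! * (k + 1) = n ! / k ! := by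
  obtain ⟨a, ha⟩ := factorial_dvd_factorial hk
  rw [ha, Nat.mul_div_cancel_left _ (factorial_pos _), factorial_succ, Nat.mul_right_comm,
    Nat.mul_div_cancel _ (factorial_pos _), mul_comm]

theorem dvd_factorial_div_factorial {k m n : ℕ} (hkm : k < m) (hmn : m ≤ n) :
    m ∣ n ! / k ! := by
  have h := descFactorial_eq_div (Nat.sub_le n k)
  rw [Nat.sub_sub_self (by omega), descFactorial_eq_prod_range] at h
  have hm := Finset.dvd_prod_of_mem (fun j ↦ n - j)
    (Finset.mem_range.mpr (show n - m < n - k by omega))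
  rwa [h, Nat.sub_sub_self hmn] at hm

theorem Nat.Prime.not_dvd_factorial_div_factorial_sub {p n i : ℕ} (hp : p.Prime) (hi : i ≤ n)
    (h : ∀ j < i, ¬ p ∣ n - j) : ¬ p ∣ n ! / (n - i)! := by
  rw [← descFactorial_eq_div hi, descFactorial_eq_prod_range, hp.prime.dvd_finsetProd_iff]
  simpa using h

theorem fInt_derivative (n : ℕ) : derivative (fInt n) = fInt n - X ^ n := by
  have hterm : ∀ k ∈ Finset.range n, derivative (C ((n ! / (k + 1)! : ℕ) : ℤ) * X ^ (k + 1)) =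
      C ((n ! / k ! : ℕ) : ℤ) * X ^ k := by
    intro k hk
    rw [derivative_C_mul_X_pow, Nat.add_sub_cancel, ← Nat.cast_mul,
      factorial_div_factorial_succ_mul (Finset.mem_range.mp hk)]
  rw [fInt, derivative_sum, Finset.sum_range_succ', Finset.sum_congr rfl hterm,
    Finset.sum_range_succ, Nat.div_self (factorial_pos n)]
  simp

theorem fInt_map_derivative {R : Type*} [CommRing R] (f : ℤ →+* R) (n : ℕ) :
    derivative ((fInt n).map f) = (fInt n).map f - X ^ n := by
  rw [derivative_map, fInt_derivative, Polynomial.map_sub, Polynomial.map_pow, map_X]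

theorem fInt_eq_add_X_pow_mul_hPoly {n i : ℕ} (hi : i ≤ n) :
    fInt n = ∑ k ∈ Finset.range (n - i), C ((n ! / k ! : ℕ) : ℤ) * X ^ k +
      X ^ (n - i) * hPoly n i := by
  rw [fInt, hPoly, show n + 1 = n - i + (i + 1) by omega, Finset.sum_range_add, Finset.mul_sum]
  congr 1
  conv_rhs => rw [← Finset.sum_range_reflect]
  refine Finset.sum_congr rfl fun k hk ↦ ?_
  rw [Finset.mem_range] at hk
  rw [show n - (i + 1 - 1 - k) = n - i + k by omega, show i - (i + 1 - 1 - k) = k by omega,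
    pow_add]
  ring

theorem hPoly_eval_zero (n i : ℕ) : (hPoly n i).eval 0 = ((n ! / (n - i)! : ℕ) : ℤ) := by
  rw [hPoly, eval_finsetSum, Finset.sum_eq_single_of_mem i (Finset.self_mem_range_succ i)]
  · simp
  · intro j hj hji
    rw [Finset.mem_range] at hj
    simp [zero_pow (show i - j ≠ 0 by omega)]

theorem derivative_eq_sub_X_pow_of_eq_X_pow_mul {R : Type*} [CommRing R] {F H : R[X]}
    {m n : ℕ} (hm : (m : R) = 0) (hmn : m ≤ n) (hF : F = X ^ m * H)
    (hder : derivative F = F - X ^ n) : derivative H = H - X ^ (n - m) := by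
  apply (isRegular_X_pow m).left
  show X ^ m * derivative H = X ^ m * (H - X ^ (n - m))
  rw [hF, derivative_mul, derivative_X_pow, hm] at hder
  simp only [map_zero, zero_mul, zero_add] at hder
  rw [hder, mul_sub, ← pow_add, Nat.add_sub_cancel' hmn]

theorem separable_of_derivative_eq_sub_X_pow {K : Type*} [Field K] {H : K[X]} {i : ℕ}
    (h0 : H.eval 0 ≠ 0) (hder : derivative H = H - X ^ i) : H.Separable := by
  have hX : IsCoprime X H := irreducible_X.coprime_iff_not_dvd.mpr <| by
    rwa [X_dvd_iff, coeff_zero_eq_eval_zero]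
  have := (hX.pow_left (m := i)).symm.add_mul_left_right (-1)
  rwa [show X ^ i + H * -1 = -derivative H by rw [hder]; ring, IsCoprime.neg_right_iff] at this

theorem fInt_factorization_mod_p_general (n p i : ℕ) (hp : p.Prime) (hdvd : p ∣ (n - i))
    (hmin : ∀ j < i, ¬ p ∣ (n - j)) :
    (fInt n).map (Int.castRingHom (ZMod p)) =
        X ^ (n - i) * (hPoly n i).map (Int.castRingHom (ZMod p)) ∧
      ((hPoly n i).map (Int.castRingHom (ZMod p))).Separable ∧
      ((hPoly n i).map (Int.castRingHom (ZMod p))).eval 0 ≠ 0 := by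
  have := Fact.mk hp
  have hin : i ≤ n := by
    -- otherwise `j := n` in `hmin` would give `¬ p ∣ 0`
    by_contra h
    exact hmin n (by omega) (by simp)
  have hfac : (fInt n).map (Int.castRingHom (ZMod p)) =
      X ^ (n - i) * (hPoly n i).map (Int.castRingHom (ZMod p)) := by
    rw [fInt_eq_add_X_pow_mul_hPoly hin, Polynomial.map_add, Polynomial.map_sum,
      Finset.sum_eq_zero, zero_add, Polynomial.map_mul, Polynomial.map_pow, map_X]
    intro k hk
    have hpk := hdvd.trans (dvd_factorial_div_factorial (Finset.mem_range.mp hk) (n.sub_le i))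
    rw [Polynomial.map_mul, map_C, eq_intCast, Int.cast_natCast,
      (ZMod.natCast_eq_zero_iff _ _).mpr hpk, C_0, zero_mul]
  have heval : ((hPoly n i).map (Int.castRingHom (ZMod p))).eval 0 ≠ 0 := by
    rw [eval_zero_map, hPoly_eval_zero, eq_intCast, Int.cast_natCast, Ne,
      ZMod.natCast_eq_zero_iff]
    exact hp.not_dvd_factorial_div_factorial_sub hin hmin
  have hder := derivative_eq_sub_X_pow_of_eq_X_pow_mul ((ZMod.natCast_eq_zero_iff _ _).mpr hdvd)
    (n.sub_le i) hfac (fInt_map_derivative _ n)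
  rw [Nat.sub_sub_self hin] at hder
  exact ⟨hfac, separable_of_derivative_eq_sub_X_pow heval hder, heval⟩

/-- Mod `p`, `f_n` factors as `x^(n-i) * h(x)` with `h` separable and `h(0) ≠ 0`. -/
theorem fInt_factorization_mod_p (n p i : ℕ) (hn : 0 < n) (hp : p.Prime)
    (hpn : p ∣ n.factorial) (hi : i ≤ n - 2) (hdvd : p ∣ (n - i))
    (hmin : ∀ j < i, ¬ p ∣ (n - j)) :
    (fInt n).map (Int.castRingHom (ZMod p)) =
        X ^ (n - i) * (hPoly n i).map (Int.castRingHom (ZMod p)) ∧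
      ((hPoly n i).map (Int.castRingHom (ZMod p))).Separable ∧
      ((hPoly n i).map (Int.castRingHom (ZMod p))).eval 0 ≠ 0 :=
  fInt_factorization_mod_p_general n p i hp hdvd hmin
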